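/- arXiv:2309.11232 — 2 statements merged into one kernel-verified Lean document; each statement's English description precedes it below -/
import Mathlib

section
/- Let D ⊂ ℝ² be measurable with |D| = 1, D ⊂ {x : 0 ≤ x₁ ≤ L, x₂ > 0} for some L > 0, and set A = ∫_D x₂ dx. Then the measure of the set {x ∈ D : 1/(32A) ≤ x₁ ≤ L − 1/(32A), 1/(4L) ≤ x₂ ≤ 4A} is at least 1/4. -/
open MeasureTheory Real
noncomputable section

abbrev E2 := EuclideanSpace ℝ (Fin 2)
def e1 : E2 := EuclideanSpace.single 0 1
def e2 : E2 := EuclideanSpace.single 1 1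
def vec (a b : ℝ) : E2 := a • e1 + b • e2
def d1 (f : E2 → ℝ) (x : E2) : ℝ := fderiv ℝ f x e1
def d2 (f : E2 → ℝ) (x : E2) : ℝ := fderiv ℝ f x e2
def grad (f : E2 → ℝ) (x : E2) : E2 := vec (d1 f x) (d2 f x)
def lap (f : E2 → ℝ) (x : E2) : ℝ := d1 (d1 f) x + d2 (d2 f) x

/-!
Outside the box, a point of `D` is either high (`x₂ ≥ 4A`), and by Markov's inequality this
part has measure at most `1/4`; or low (`x₂ ≤ 1/(4L)`), inside a rectangle `[0, L] × [0, 1/(4L)]`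
of area `1/4`; or in one of the two vertical strips of width `1/(32A)` and height `4A` at the
sides of `[0, L]`, of area `1/8` each. As `|D| = 1`, the box keeps at least `1/4`.
-/

open Set

theorem EuclideanSpace.volume_setOf_forall_mem_Icc {ι : Type*} [Fintype ι] (a b : ι → ℝ) :
    volume {x : EuclideanSpace ℝ ι | ∀ i, x i ∈ Icc (a i) (b i)} =
      ∏ i, ENNReal.ofReal (b i - a i) := by
  have : {x : EuclideanSpace ℝ ι | ∀ i, x i ∈ Icc (a i) (b i)} = WithLp.ofLp ⁻¹' Icc a b := by
    ext x; simp [Pi.le_def, forall_and]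
  rw [this, (PiLp.volume_preserving_ofLp ι).measure_preimage measurableSet_Icc.nullMeasurableSet,
    Real.volume_Icc_pi]

theorem measureReal_restrict_le_of_forall_mem_box {D S : Set E2} (hD : MeasurableSet D)
    {a b c d : ℝ} (hab : a ≤ b) (hcd : c ≤ d)
    (hS : ∀ x ∈ D, x ∈ S → x 0 ∈ Icc a b ∧ x 1 ∈ Icc c d) :
    (volume.restrict D).real S ≤ (b - a) * (d - c) := by
  have hbox : volume {x : E2 | x 0 ∈ Icc a b ∧ x 1 ∈ Icc c d} =
      ENNReal.ofReal (b - a) * ENNReal.ofReal (d - c) := by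
    simpa [Fin.forall_fin_two, Fin.prod_univ_two] using
      EuclideanSpace.volume_setOf_forall_mem_Icc ![a, c] ![b, d]
  rw [measureReal_restrict_apply' hD]
  calc volume.real (S ∩ D) ≤ volume.real {x : E2 | x 0 ∈ Icc a b ∧ x 1 ∈ Icc c d} :=
        measureReal_mono (fun x hx => hS x hx.2 hx.1) (by rw [hbox]; finiteness)
    _ = (b - a) * (d - c) := by
        rw [measureReal_def, hbox, ENNReal.toReal_mul, ENNReal.toReal_ofReal (sub_nonneg.2 hab),
          ENNReal.toReal_ofReal (sub_nonneg.2 hcd)]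

theorem measureReal_univ_le_box_add (μ : Measure E2) [IsFiniteMeasure μ] (a b c d : ℝ) :
    μ.real univ ≤ μ.real {x | a ≤ x 0 ∧ x 0 ≤ b ∧ c ≤ x 1 ∧ x 1 ≤ d} + μ.real {x | d ≤ x 1} +
      μ.real {x | x 1 ≤ c} + μ.real {x | x 0 ≤ a ∧ x 1 ≤ d} + μ.real {x | b ≤ x 0 ∧ x 1 ≤ d} := by
  have hcover : (univ : Set E2) ⊆ {x | a ≤ x 0 ∧ x 0 ≤ b ∧ c ≤ x 1 ∧ x 1 ≤ d} ∪ {x | d ≤ x 1} ∪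
      {x | x 1 ≤ c} ∪ {x | x 0 ≤ a ∧ x 1 ≤ d} ∪ {x | b ≤ x 0 ∧ x 1 ≤ d} := by
    intro x _
    simp only [mem_union, mem_ofPred_eq]
    by_contra!
    grind
  grw [measureReal_mono hcover, measureReal_union_le, measureReal_union_le, measureReal_union_le,
    measureReal_union_le]

/-- under the same assumptions, the part of `D` in the box
`1/(32A) ≤ x₁ ≤ L - 1/(32A)`, `1/(4L) ≤ x₂ ≤ 4A` has measure at least `1/4`. -/
theorem stmt2 (D : Set E2) (hD : MeasurableSet D) (hvol : volume D = 1)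
    (L : ℝ) (hL : 0 < L)
    (hsub : ∀ x ∈ D, (0 ≤ x 0 ∧ x 0 ≤ L) ∧ 0 < x 1)
    (hint : IntegrableOn (fun x : E2 => x 1) D volume)
    (A : ℝ) (hA : A = ∫ x in D, x 1) :
    ENNReal.ofReal (1 / 4) ≤
      volume {x ∈ D | 1 / (32 * A) ≤ x 0 ∧ x 0 ≤ L - 1 / (32 * A) ∧
        1 / (4 * L) ≤ x 1 ∧ x 1 ≤ 4 * A} := by
  set μ := volume.restrict D
  have : IsProbabilityMeasure μ := ⟨by rw [Measure.restrict_apply_univ, hvol]⟩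
  have hnonneg : 0 ≤ᵐ[μ] fun x : E2 => x 1 :=
    ae_restrict_of_forall_mem hD fun x hx => (hsub x hx).2.le
  have hA_pos : 0 < A := by
    rw [hA, integral_pos_iff_support_of_nonneg_ae hnonneg hint]
    refine lt_of_lt_of_le ?_ (measure_mono fun x hx => (hsub x hx).2.ne')
    rw [Measure.restrict_apply_self, hvol]
    exact one_pos
  have hhigh : μ.real {x | 4 * A ≤ x 1} ≤ 1 / 4 := by
    have hmarkov := mul_meas_ge_le_integral_of_nonneg hnonneg hint (4 * A)
    rw [← hA] at hmarkov
    nlinarith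
  have hlow : μ.real {x | x 1 ≤ 1 / (4 * L)} ≤ 1 / 4 :=
    (measureReal_restrict_le_of_forall_mem_box hD hL.le (by positivity)
      fun x hx hx1 => ⟨(hsub x hx).1, (hsub x hx).2.le, hx1⟩).trans_eq (by field_simp; ring)
  have hleft : μ.real {x | x 0 ≤ 1 / (32 * A) ∧ x 1 ≤ 4 * A} ≤ 1 / 8 :=
    (measureReal_restrict_le_of_forall_mem_box hD (by positivity) (by positivity)
      fun x hx hxS => ⟨⟨(hsub x hx).1.1, hxS.1⟩, (hsub x hx).2.le, hxS.2⟩).trans_eq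
      (by field_simp; ring)
  have hright : μ.real {x | L - 1 / (32 * A) ≤ x 0 ∧ x 1 ≤ 4 * A} ≤ 1 / 8 :=
    (measureReal_restrict_le_of_forall_mem_box hD (sub_le_self _ (by positivity)) (by positivity)
      fun x hx hxS => ⟨⟨hxS.1, (hsub x hx).1.2⟩, (hsub x hx).2.le, hxS.2⟩).trans_eq
      (by field_simp; ring)
  have hcover :=
    measureReal_univ_le_box_add μ (1 / (32 * A)) (L - 1 / (32 * A)) (1 / (4 * L)) (4 * A)
  rw [probReal_univ, measureReal_restrict_apply' hD, inter_comm, inter_ofPred_eq_sep] at hcover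
  exact ENNReal.ofReal_le_of_le_toReal (by rw [← measureReal_def]; linarith)
end
end

section
/- Let D ⊂ ℝ² be measurable with |D| = 1, D ⊂ {0 ≤ x₁ ≤ L} × (0,∞), A = ∫_D x₂ dx, and let g, h : ℝ → ℝ satisfy: g' = 1 on (1/(32A), L − 1/(32A)) and g' ≥ 0 everywhere; h = 1 on (1/(4L), 4A) and h ≥ 0 everywhere. Then ∫_D g'(x₁) h(x₂) dx ≥ 1/4. -/
/-!
The integrand is nonnegative and equals `1` on the rectangle `(a, L - a) × (1/(4L), 4A)`,
`a = 1/(32A)`, so it suffices that this rectangle carries at least `1/4` of the unit mass of `D`.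
The rest of `D` lies in `{x₂ ≥ 4A}`, of measure `≤ 1/4` by Markov's inequality since
`∫_D x₂ = A`, in the box `[0, L] × [0, 1/(4L)]` of area `1/4`, or in the two boxes
`[0, a] × [0, 4A]` and `[L - a, L] × [0, 4A]` of area `1/8` each.
-/

open MeasureTheory Real
noncomputable section

open Set

lemma setIntegral_pos_of_forall_mem_pos {α : Type*} [MeasurableSpace α] {μ : Measure α}
    {s : Set α} {f : α → ℝ} (hs : MeasurableSet s) (hμs : μ s ≠ 0) (hf : ∀ x ∈ s, 0 < f x)
    (hfi : IntegrableOn f s μ) : 0 < ∫ x in s, f x ∂μ := by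
  rw [setIntegral_pos_iff_support_of_nonneg_ae
    ((ae_restrict_iff' hs).2 (ae_of_all _ fun x hx => (hf x hx).le)) hfi]
  exact (pos_iff_ne_zero.2 hμs).trans_le (measure_mono fun x hx => ⟨(hf x hx).ne', hx⟩)

lemma volume_coord_mem_prod (s t : Set ℝ) (hs : MeasurableSet s) (ht : MeasurableSet t) :
    volume {x : E2 | x 0 ∈ s ∧ x 1 ∈ t} = volume s * volume t := by
  have hpi : {x : E2 | x 0 ∈ s ∧ x 1 ∈ t} =
      (MeasurableEquiv.toLp 2 (Fin 2 → ℝ)).symm ⁻¹' univ.pi ![s, t] := by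
    ext x
    simp [mem_pi, Fin.forall_fin_two]
  have hmeas : MeasurableSet (univ.pi ![s, t]) :=
    MeasurableSet.univ_pi fun i => by fin_cases i <;> assumption
  rw [hpi, (EuclideanSpace.volume_preserving_symm_measurableEquiv_toLp (Fin 2)).measure_preimage
    hmeas.nullMeasurableSet, volume_pi_pi, Fin.prod_univ_two]
  rfl

lemma measureReal_coord_mem_Icc {a b c d : ℝ} (hab : a ≤ b) (hcd : c ≤ d) :
    volume.real {x : E2 | x 0 ∈ Icc a b ∧ x 1 ∈ Icc c d} = (b - a) * (d - c) := by
  rw [measureReal_def, volume_coord_mem_prod _ _ measurableSet_Icc measurableSet_Icc,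
    Real.volume_Icc, Real.volume_Icc, ENNReal.toReal_mul,
    ENNReal.toReal_ofReal (sub_nonneg.2 hab), ENNReal.toReal_ofReal (sub_nonneg.2 hcd)]

lemma restrict_measureReal_le_of_forall_mem_Icc {D T : Set E2} (hD : MeasurableSet D)
    {a b c d : ℝ} (hab : a ≤ b) (hcd : c ≤ d)
    (hT : ∀ x ∈ D, x ∈ T → x 0 ∈ Icc a b ∧ x 1 ∈ Icc c d) :
    (volume.restrict D).real T ≤ (b - a) * (d - c) := by
  rw [measureReal_restrict_apply' hD, ← measureReal_coord_mem_Icc hab hcd]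
  refine measureReal_mono (fun x hx => hT x hx.2 hx.1) ?_
  rw [volume_coord_mem_prod _ _ measurableSet_Icc measurableSet_Icc, Real.volume_Icc,
    Real.volume_Icc]
  finiteness

lemma one_sub_le_restrict_measureReal_rect {D : Set E2} (hD : MeasurableSet D)
    (hvol : volume D = 1) {L : ℝ} (hL : 0 ≤ L) (hsub : ∀ x ∈ D, (0 ≤ x 0 ∧ x 0 ≤ L) ∧ 0 < x 1)
    (hint : IntegrableOn (fun x : E2 => x 1) D volume) {a b c : ℝ}
    (ha : 0 ≤ a) (hb : 0 ≤ b) (hc : 0 < c) :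
    1 - ((∫ x in D, x 1) / c + L * b + 2 * (a * c)) ≤
      (volume.restrict D).real {x | x 0 ∈ Ioo a (L - a) ∧ x 1 ∈ Ioo b c} := by
  set μ := volume.restrict D
  have : IsProbabilityMeasure μ := ⟨by rw [Measure.restrict_apply_univ, hvol]⟩
  set rect := {x : E2 | x 0 ∈ Ioo a (L - a) ∧ x 1 ∈ Ioo b c}
  set high := {x : E2 | c ≤ x 1}
  set low := {x : E2 | x 1 ≤ b}
  set left := {x : E2 | x 0 ≤ a ∧ x 1 < c}
  set right := {x : E2 | L - a ≤ x 0 ∧ x 1 < c}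
  have hcover : univ ⊆ rect ∪ high ∪ low ∪ left ∪ right := by
    intro x _
    simp only [rect, high, low, left, right, mem_union, mem_ofPred_eq, mem_Ioo]
    grind
  have hhigh : μ.real high ≤ (∫ x in D, x 1) / c := by
    rw [le_div_iff₀ hc, mul_comm]
    exact mul_meas_ge_le_integral_of_nonneg
      ((ae_restrict_iff' hD).2 (ae_of_all _ fun x hx => (hsub x hx).2.le)) hint c
  have hlow : μ.real low ≤ (L - 0) * (b - 0) :=
    restrict_measureReal_le_of_forall_mem_Icc hD hL hb fun x hx hxT =>
      ⟨(hsub x hx).1, (hsub x hx).2.le, hxT⟩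
  have hleft : μ.real left ≤ (a - 0) * (c - 0) :=
    restrict_measureReal_le_of_forall_mem_Icc hD ha hc.le fun x hx hxT =>
      ⟨⟨(hsub x hx).1.1, hxT.1⟩, (hsub x hx).2.le, hxT.2.le⟩
  have hright : μ.real right ≤ (L - (L - a)) * (c - 0) :=
    restrict_measureReal_le_of_forall_mem_Icc hD (by linarith) hc.le fun x hx hxT =>
      ⟨⟨hxT.1, (hsub x hx).1.2⟩, (hsub x hx).2.le, hxT.2.le⟩
  have hone : 1 ≤ μ.real (rect ∪ high ∪ low ∪ left ∪ right) :=
    probReal_univ (μ := μ) ▸ measureReal_mono hcover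
  linarith [measureReal_union_le (μ := μ) (rect ∪ high ∪ low ∪ left) right,
    measureReal_union_le (μ := μ) (rect ∪ high ∪ low) left,
    measureReal_union_le (μ := μ) (rect ∪ high) low, measureReal_union_le (μ := μ) rect high]

/-- lower bound `∫_D g'(x₁)h(x₂) dx ≥ 1/4` for the cutoffs of the
perimeter lemma. -/
theorem stmt12 (D : Set E2) (hD : MeasurableSet D) (hvol : volume D = 1)
    (L A : ℝ) (hL : 0 < L)
    (hsub : ∀ x ∈ D, (0 ≤ x 0 ∧ x 0 ≤ L) ∧ 0 < x 1)
    (hA : A = ∫ x in D, x 1)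
    (hAint : IntegrableOn (fun x : E2 => x 1) D volume)
    (g h : ℝ → ℝ)
    (hg1 : ∀ x ∈ Set.Ioo (1 / (32 * A)) (L - 1 / (32 * A)), deriv g x = 1)
    (hg0 : ∀ x, 0 ≤ deriv g x)
    (hh1 : ∀ x ∈ Set.Ioo (1 / (4 * L)) (4 * A), h x = 1)
    (hh0 : ∀ x, 0 ≤ h x)
    (hint : IntegrableOn (fun x : E2 => deriv g (x 0) * h (x 1)) D volume) :
    (1 : ℝ) / 4 ≤ ∫ x in D, deriv g (x 0) * h (x 1) := by
  have hA_pos : 0 < A := hA ▸ setIntegral_pos_of_forall_mem_pos hD (by simp [hvol])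
    (fun x hx => (hsub x hx).2) hAint
  have hrect := one_sub_le_restrict_measureReal_rect hD hvol hL.le hsub hAint
    (a := 1 / (32 * A)) (b := 1 / (4 * L)) (c := 4 * A) (by positivity) (by positivity)
    (by positivity)
  have hbad : A / (4 * A) + L * (1 / (4 * L)) + 2 * (1 / (32 * A) * (4 * A)) = 3 / 4 := by
    field_simp
    ring
  rw [← hA, hbad] at hrect
  have : IsFiniteMeasure (volume.restrict D) := ⟨by simp [hvol]⟩
  calc (1 : ℝ) / 4 ≤ (volume.restrict D).real {x | x 0 ∈ Ioo (1 / (32 * A)) (L - 1 / (32 * A)) ∧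
        x 1 ∈ Ioo (1 / (4 * L)) (4 * A)} := by linarith
    _ ≤ (volume.restrict D).real {x | 1 ≤ deriv g (x 0) * h (x 1)} :=
        measureReal_mono fun x hx => by simp [hg1 _ hx.1, hh1 _ hx.2]
    _ ≤ ∫ x in D, deriv g (x 0) * h (x 1) := by
        simpa using mul_meas_ge_le_integral_of_nonneg
          (ae_of_all _ fun x => mul_nonneg (hg0 _) (hh0 _)) hint 1
end
end
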